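/- arXiv:1209.2772 — 5 statements merged into one kernel-verified Lean document; each statement's English description precedes it below -/
import Mathlib

section
/- For a cubic polynomial λ³ + aλ² + bλ + c with real coefficients, all roots have negative real part if and only if a > 0, b > 0, c > 0, and ab > c. -/
lemma cubic_real_root (a b c : ℝ) : ∃ r : ℝ, r^3 + a*r^2 + b*r + c = 0 := by
  set f : ℝ → ℝ := fun x => x^3 + a*x^2 + b*x + c with hf
  set M : ℝ := 1 + |a| + |b| + |c| with hM
  have hM1 : 1 ≤ M := by
    have := abs_nonneg a; have := abs_nonneg b; have := abs_nonneg c; linarith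
  have hM0 : (0:ℝ) ≤ M := by linarith
  have hcont : ContinuousOn f (Set.Icc (-M) M) := by fun_prop
  have h1 : f (-M) ≤ 0 := by
    have ha := le_abs_self a; have hb := neg_abs_le b; have hc := le_abs_self c
    have hb' := le_abs_self b
    simp only [hf]
    nlinarith [sq_nonneg M, abs_nonneg a, abs_nonneg b, abs_nonneg c,
      mul_le_mul_of_nonneg_right ha (sq_nonneg M),
      mul_le_mul_of_nonneg_left hb' hM0]
  have h2 : 0 ≤ f M := by
    have ha := neg_abs_le a; have hb := neg_abs_le b; have hc := neg_abs_le c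
    simp only [hf]
    nlinarith [sq_nonneg M, abs_nonneg a, abs_nonneg b, abs_nonneg c,
      mul_le_mul_of_nonneg_right ha (sq_nonneg M),
      mul_le_mul_of_nonneg_left (neg_abs_le b) hM0]
  obtain ⟨r, _, hr⟩ := intermediate_value_Icc (by linarith : (-M) ≤ M) hcont ⟨h1, h2⟩
  exact ⟨r, hr⟩

lemma rh_conds (a b c r : ℝ) (hr : r^3 + a*r^2 + b*r + c = 0) (hrneg : r < 0)
    (hP : 0 < a + r) (hQ : 0 < b + a*r + r^2) :
    0 < a ∧ 0 < b ∧ 0 < c ∧ c < a * b := by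
  have key : a*b - c = (a+r)*(b+r^2) := by linear_combination -hr
  refine ⟨by linarith, ?_, ?_, ?_⟩
  · nlinarith [mul_pos (neg_pos.mpr hrneg) hP]
  · nlinarith [mul_pos (neg_pos.mpr hrneg) hQ]
  · nlinarith [mul_pos hP (by nlinarith [sq_nonneg r] : 0 < b + r^2)]

theorem routh_hurwitz_cubic (a b c : ℝ) :
    (∀ z : ℂ, z ^ 3 + (a : ℂ) * z ^ 2 + (b : ℂ) * z + (c : ℂ) = 0 → z.re < 0) ↔
      (0 < a ∧ 0 < b ∧ 0 < c ∧ c < a * b) := by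
  obtain ⟨r, hr⟩ := cubic_real_root a b c
  have hrC : (r:ℂ)^3 + (a:ℂ)*(r:ℂ)^2 + (b:ℂ)*(r:ℂ) + (c:ℂ) = 0 := by
    exact_mod_cast congrArg (Complex.ofReal) hr
  constructor
  · intro h
    have hrneg : r < 0 := by simpa using h r hrC
    rcases le_or_gt (4*(b+a*r+r^2)) ((a+r)^2) with hD | hD
    · -- quadratic factor has real roots
      set s : ℝ := Real.sqrt ((a+r)^2 - 4*(b+a*r+r^2)) with hsdef
      have hs2 : s^2 = (a+r)^2 - 4*(b+a*r+r^2) := Real.sq_sqrt (by linarith)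
      set x₁ : ℝ := (-(a+r)+s)/2 with hx1def
      set x₂ : ℝ := (-(a+r)-s)/2 with hx2def
      have hq1 : x₁^2 + (a+r)*x₁ + (b+a*r+r^2) = 0 := by
        rw [hx1def]; linear_combination hs2/4
      have hq2 : x₂^2 + (a+r)*x₂ + (b+a*r+r^2) = 0 := by
        rw [hx2def]; linear_combination hs2/4
      have hx1 : x₁^3 + a*x₁^2 + b*x₁ + c = 0 := by
        linear_combination (x₁ - r)*hq1 + hr
      have hx2 : x₂^3 + a*x₂^2 + b*x₂ + c = 0 := by
        linear_combination (x₂ - r)*hq2 + hr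
      have hx1C : ((x₁:ℂ))^3 + (a:ℂ)*(x₁:ℂ)^2 + (b:ℂ)*(x₁:ℂ) + (c:ℂ) = 0 := by
        exact_mod_cast congrArg (Complex.ofReal) hx1
      have hx2C : ((x₂:ℂ))^3 + (a:ℂ)*(x₂:ℂ)^2 + (b:ℂ)*(x₂:ℂ) + (c:ℂ) = 0 := by
        exact_mod_cast congrArg (Complex.ofReal) hx2
      have hx1neg : x₁ < 0 := by simpa using h x₁ hx1C
      have hx2neg : x₂ < 0 := by simpa using h x₂ hx2C
      have hsum : x₁ + x₂ = -(a+r) := by rw [hx1def, hx2def]; ring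
      have hprod : x₁ * x₂ = b+a*r+r^2 := by
        rw [hx1def, hx2def]; linear_combination (-1/4)*hs2
      exact rh_conds a b c r hr hrneg (by linarith)
        (by nlinarith [mul_pos_of_neg_of_neg hx1neg hx2neg])
    · -- complex conjugate roots
      set s : ℝ := Real.sqrt (4*(b+a*r+r^2) - (a+r)^2) with hsdef
      have hs2 : s^2 = 4*(b+a*r+r^2) - (a+r)^2 := Real.sq_sqrt (by linarith)
      set z : ℂ := (↑(-(a+r)/2) : ℂ) + (↑(s/2) : ℂ) * Complex.I with hzdef
      have hs2C : ((s:ℂ))^2 = 4*((b:ℂ)+(a:ℂ)*(r:ℂ)+(r:ℂ)^2) - ((a:ℂ)+(r:ℂ))^2 := by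
        exact_mod_cast congrArg (Complex.ofReal) hs2
      have hq : z^2 + ((a:ℂ)+(r:ℂ))*z + ((b:ℂ)+(a:ℂ)*(r:ℂ)+(r:ℂ)^2) = 0 := by
        rw [hzdef]; push_cast
        linear_combination (Complex.I^2/4) * hs2C +
          ((4*((b:ℂ)+(a:ℂ)*(r:ℂ)+(r:ℂ)^2) - ((a:ℂ)+(r:ℂ))^2)/4) * Complex.I_sq
      have hzC : z^3 + (a:ℂ)*z^2 + (b:ℂ)*z + (c:ℂ) = 0 := by
        linear_combination (z - (r:ℂ))*hq + hrC
      have hre : z.re = -(a+r)/2 := by rw [hzdef]; simp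
      have hP : 0 < a + r := by
        have := h z hzC; rw [hre] at this; linarith
      exact rh_conds a b c r hr hrneg hP (by nlinarith [sq_nonneg (a+r)])
  · rintro ⟨ha, hb, hc, habc⟩ z hz
    have hrneg : r < 0 := by
      by_contra h0
      push_neg at h0
      nlinarith [mul_nonneg (mul_nonneg h0 h0) h0, mul_nonneg ha.le (mul_nonneg h0 h0),
        mul_nonneg hb.le h0]
    have hQ : 0 < b + a*r + r^2 := by nlinarith [hr]
    have key : a*b - c = (a+r)*(b+r^2) := by linear_combination -hr
    have hP : 0 < a + r := by nlinarith [sq_nonneg r]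
    have hfac : (z - (r:ℂ)) * (z^2 + ((a:ℂ)+(r:ℂ))*z + ((b:ℂ)+(a:ℂ)*(r:ℂ)+(r:ℂ)^2)) = 0 := by
      linear_combination hz - hrC
    rcases mul_eq_zero.mp hfac with h0 | hq
    · have : z = (r:ℂ) := by linear_combination h0
      rw [this]; simpa using hrneg
    · rw [Complex.ext_iff] at hq
      obtain ⟨h1, h2⟩ := hq
      simp only [Complex.add_re, Complex.add_im, Complex.mul_re, Complex.mul_im,
        Complex.ofReal_re, Complex.ofReal_im, Complex.zero_re, Complex.zero_im,
        pow_two, sq] at h1 h2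
      have h1' : z.re*z.re - z.im*z.im + (a+r)*z.re + (b + a*r + r^2) = 0 := by
        linear_combination h1
      have h2' : 2*z.re*z.im + (a+r)*z.im = 0 := by linear_combination h2
      by_contra hre
      push_neg at hre
      have h3 : (2*z.re*z.im + (a+r)*z.im) * z.im = 0 := by rw [h2']; ring
      have h4 : (2*z.re + (a+r)) * (z.im*z.im) = 0 := by linear_combination h3
      have h5 : z.im * z.im = 0 := by
        rcases mul_eq_zero.mp h4 with h' | h'
        · linarith
        · exact h'
      nlinarith [h1', h5, mul_nonneg hre hre, mul_nonneg hP.le hre]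
end

section
/- If α > 0, β > 0 and ξ > 1, then all roots of the polynomial λ³ + (α + β + ξ)λ² + (αξ + βξ)λ + (ξ − 1)αβ have negative real part. -/
theorem endemic_state_stable (α β ξ : ℝ) (hα : 0 < α) (hβ : 0 < β) (hξ : 1 < ξ) :
    ∀ z : ℂ, z ^ 3 + ((α + β + ξ : ℝ) : ℂ) * z ^ 2 + ((α * ξ + β * ξ : ℝ) : ℂ) * z
        + (((ξ - 1) * α * β : ℝ) : ℂ) = 0 → z.re < 0 := by
  intro z h
  by_contra hx
  push_neg at hx
  have hre := congrArg Complex.re h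
  have him := congrArg Complex.im h
  simp [pow_succ, Complex.add_re, Complex.add_im, Complex.mul_re, Complex.mul_im,
    Complex.ofReal_re, Complex.ofReal_im] at hre him
  set a := α + β + ξ with hadef
  set b := α * ξ + β * ξ with hbdef
  set c := (ξ - 1) * α * β with hcdef
  have ha : 0 < a := by simp only [hadef]; linarith
  have hb : 0 < b := by simp only [hbdef]; nlinarith
  have hξ1 : (0:ℝ) < ξ - 1 := by linarith
  have hξ0 : (0:ℝ) < ξ := by linarith
  have hc : 0 < c := by simp only [hcdef]; positivity
  have hab : c < a * b := by
    simp only [hadef, hbdef, hcdef]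
    nlinarith [mul_pos hα hβ, mul_pos (mul_pos hα hα) hξ0, mul_pos (mul_pos hβ hβ) hξ0,
      mul_pos (mul_pos hα hβ) (mul_pos hξ0 hξ0), mul_pos (mul_pos hα hβ) hξ0]
  rcases eq_or_ne z.im 0 with hy | hy
  · rw [hy] at hre
    nlinarith [mul_nonneg (mul_nonneg hx hx) hx, mul_nonneg hx hx, hre]
  · have h2 : z.im * (3 * z.re * z.re - z.im * z.im + 2 * a * z.re + b) = 0 := by
      linear_combination him
    have hy2 : z.im * z.im = 3 * z.re * z.re + 2 * a * z.re + b := by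
      rcases mul_eq_zero.mp h2 with h3 | h3
      · exact absurd h3 hy
      · linarith
    have key : -8 * z.re ^ 3 - 8 * a * z.re ^ 2 - 2 * (a ^ 2 + b) * z.re + (c - a * b) = 0 := by
      linear_combination hre + (3 * z.re + a) * hy2
    nlinarith [key, mul_nonneg (mul_nonneg hx hx) hx, mul_nonneg hx hx,
      mul_nonneg (sq_nonneg a) hx, mul_nonneg hb.le hx, mul_pos ha hb]
end

section
/- Let ξ > 1, α, β > 0, d_I, d_V > 0, d_χ ≥ 0. Set a₁ = ξ + α + β, a₂ = 1 + d_I + d_V, b₁ = ξα + ξβ, b₂ = αd_V + βd_I + ξd_I + α + ξd_V + β − αd_χ, c₂ = ξαd_V + ξβd_I − αβd_χ. If b₂ > 0 and c₂ > 0, then a₁b₂ + a₂b₁ > c₂. -/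
theorem condition_S2 (ξ α β dI dV dχ : ℝ)
    (hξ : 1 < ξ) (hα : 0 < α) (hβ : 0 < β) (hdI : 0 < dI) (hdV : 0 < dV) (hdχ : 0 ≤ dχ)
    (hb2 : 0 < α * dV + β * dI + ξ * dI + α + ξ * dV + β - α * dχ)
    (hc2 : 0 < ξ * α * dV + ξ * β * dI - α * β * dχ) :
    (ξ + α + β) * (α * dV + β * dI + ξ * dI + α + ξ * dV + β - α * dχ)
        + (1 + dI + dV) * (ξ * α + ξ * β)
      > ξ * α * dV + ξ * β * dI - α * β * dχ := by
  
  have hξ0 : (0:ℝ) < ξ := lt_trans one_pos hξ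
  nlinarith [mul_pos (by linarith : (0:ℝ) < ξ + α + β) hb2, mul_pos hξ0 hα, mul_pos hξ0 hβ,
    mul_pos (mul_pos hξ0 hα) hdI, mul_pos (mul_pos hξ0 hβ) hdV,
    mul_nonneg (mul_nonneg hα.le hβ.le) hdχ]
end

section
/- Let ξ > 1, α, β > 0, d_I, d_V > 0, d_χ ≥ 0. Set a₁ = ξ + α + β, a₂ = 1 + d_I + d_V, b₂ = αd_V + βd_I + ξd_I + α + ξd_V + β − αd_χ, b₃ = d_I d_V + d_I + d_V, c₃ = ξd_I d_V + αd_V + βd_I − αd_χ d_V. If b₂ > 0 and c₃ > 0, then a₁b₃ + a₂b₂ > c₃. -/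
theorem condition_S3 (ξ α β dI dV dχ : ℝ)
    (hξ : 1 < ξ) (hα : 0 < α) (hβ : 0 < β) (hdI : 0 < dI) (hdV : 0 < dV) (hdχ : 0 ≤ dχ)
    (hb2 : 0 < α * dV + β * dI + ξ * dI + α + ξ * dV + β - α * dχ)
    (hc3 : 0 < ξ * dI * dV + α * dV + β * dI - α * dχ * dV) :
    (ξ + α + β) * (dI * dV + dI + dV)
        + (1 + dI + dV) * (α * dV + β * dI + ξ * dI + α + ξ * dV + β - α * dχ)
      > ξ * dI * dV + α * dV + β * dI - α * dχ * dV := by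
  nlinarith [mul_pos hdI hdV, mul_nonneg hdχ hdV.le, mul_nonneg (mul_nonneg hα.le hdχ) hdV.le, mul_pos hα hdV, mul_pos hβ hdI, mul_pos hdV hb2, mul_pos hdI hb2]
end

section
/- Let ξ > 1, α, β > 0, d_I, d_V > 0, and d_χ ≥ 0. If the cubic λ³ + (a₁ + a₂q²)λ² + (b₁ + b₂q² + b₃q⁴)λ + (c₁ + c₂q² + c₃q⁴ + c₄q⁶) has a root with nonnegative real part for some q² > 0 (where the coefficients are those of the linearized HIV reaction-chemotaxis-diffusion model: a₁ = ξ+α+β, a₂ = 1+d_I+d_V, b₁ = ξ(α+β), b₂ = αd_V + βd_I + ξd_I + α + ξd_V + β − αd_χ, b₃ = d_I d_V + d_I + d_V, c₁ = (ξ−1)αβ, c₂ = ξαd_V + ξβd_I − αβd_χ, c₃ = ξd_I d_V + αd_V + βd_I − αd_χ d_V, c₄ = d_I d_V), then at least one of b₂ ≤ 0, c₂ ≤ 0, or c₃ ≤ 0 holds. -/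
lemma cubic_stable (A B C : ℝ) (hA : 0 < A) (hB : 0 < B) (hC : 0 < C)
    (hRH : C < A * B) (z : ℂ) (hz : 0 ≤ z.re) :
    z ^ 3 + (A : ℂ) * z ^ 2 + (B : ℂ) * z + (C : ℂ) ≠ 0 := by
  intro heq
  have hre := congrArg Complex.re heq
  have him := congrArg Complex.im heq
  simp [pow_succ, Complex.add_re, Complex.add_im, Complex.mul_re, Complex.mul_im,
    Complex.ofReal_re, Complex.ofReal_im] at hre him
  set x := z.re with hx
  set y := z.im with hy
  rcases eq_or_ne y 0 with h0 | h0
  · rw [h0] at hre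
    nlinarith [sq_nonneg x, mul_nonneg hz hz]
  · have hfac : y * (3 * x ^ 2 + 2 * A * x + B - y ^ 2) = 0 := by nlinarith [him]
    have hb : 3 * x ^ 2 + 2 * A * x + B - y ^ 2 = 0 :=
      (mul_eq_zero.mp hfac).resolve_left h0
    nlinarith [sq_nonneg x, mul_nonneg hz hz, mul_nonneg (mul_nonneg hz hz) hz,
      mul_nonneg hz hA.le, mul_nonneg (mul_nonneg hz hz) hA.le, mul_nonneg hz hB.le]

set_option maxHeartbeats 800000 in
theorem turing_necessary_condition (ξ α β dI dV dχ : ℝ)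
    (hξ : 1 < ξ) (hα : 0 < α) (hβ : 0 < β) (hdI : 0 < dI) (hdV : 0 < dV) (hdχ : 0 ≤ dχ)
    (h : ∃ q2 : ℝ, 0 < q2 ∧ ∃ z : ℂ, 0 ≤ z.re ∧
      z ^ 3 + ((ξ + α + β + (1 + dI + dV) * q2 : ℝ) : ℂ) * z ^ 2
        + ((ξ * (α + β)
            + (α * dV + β * dI + ξ * dI + α + ξ * dV + β - α * dχ) * q2
            + (dI * dV + dI + dV) * q2 ^ 2 : ℝ) : ℂ) * z
        + (((ξ - 1) * α * β + (ξ * α * dV + ξ * β * dI - α * β * dχ) * q2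
            + (ξ * dI * dV + α * dV + β * dI - α * dχ * dV) * q2 ^ 2
            + dI * dV * q2 ^ 3 : ℝ) : ℂ) = 0) :
    α * dV + β * dI + ξ * dI + α + ξ * dV + β - α * dχ ≤ 0 ∨
    ξ * α * dV + ξ * β * dI - α * β * dχ ≤ 0 ∨
    ξ * dI * dV + α * dV + β * dI - α * dχ * dV ≤ 0 := by
  by_contra hcon
  push_neg at hcon
  obtain ⟨hb2, hc2, hc3⟩ := hcon
  obtain ⟨q2, hq, z, hzre, heq⟩ := h
  set A := ξ + α + β + (1 + dI + dV) * q2 with hA_def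
  set B := ξ * (α + β)
      + (α * dV + β * dI + ξ * dI + α + ξ * dV + β - α * dχ) * q2
      + (dI * dV + dI + dV) * q2 ^ 2 with hB_def
  set C := (ξ - 1) * α * β + (ξ * α * dV + ξ * β * dI - α * β * dχ) * q2
      + (ξ * dI * dV + α * dV + β * dI - α * dχ * dV) * q2 ^ 2
      + dI * dV * q2 ^ 3 with hC_def
  have hA : 0 < A := by positivity
  have hξ0 : (0:ℝ) < ξ := by linarith
  have hB : 0 < B := by
    have h1 : 0 < ξ * (α + β) := by positivity
    have h2 : 0 < (α * dV + β * dI + ξ * dI + α + ξ * dV + β - α * dχ) * q2 := mul_pos hb2 hq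
    have h3 : 0 ≤ (dI * dV + dI + dV) * q2 ^ 2 := by positivity
    linarith
  have hC : 0 < C := by
    have hξ1 : (0:ℝ) < ξ - 1 := by linarith
    have h1 : 0 < (ξ - 1) * α * β := by positivity
    nlinarith [mul_pos hc2 hq, mul_pos hc3 (mul_pos hq hq),
      mul_pos (mul_pos hdI hdV) (mul_pos (mul_pos hq hq) hq)]
  have hRH : C < A * B := by
    have t1 : (ξ + α + β) * (ξ * (α + β)) - (ξ - 1) * α * β > 0 := by
      nlinarith [mul_pos (mul_pos hξ0 hξ0) hα, mul_pos (mul_pos hξ0 hξ0) hβ,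
        mul_pos (mul_pos hξ0 hα) hα, mul_pos (mul_pos hξ0 hβ) hβ,
        mul_pos (mul_pos hξ0 hα) hβ, mul_pos hα hβ]
    have t2 : (ξ + α + β) * (α * dV + β * dI + ξ * dI + α + ξ * dV + β - α * dχ)
        + (1 + dI + dV) * (ξ * (α + β)) - (ξ * α * dV + ξ * β * dI - α * β * dχ) > 0 := by
      nlinarith [mul_pos (show (0:ℝ) < ξ + α + β by linarith) hb2,
        mul_pos hξ0 hα, mul_pos hξ0 hβ, mul_pos (mul_pos hξ0 hα) hdI,
        mul_pos (mul_pos hξ0 hβ) hdV, mul_nonneg (mul_pos hα hβ).le hdχ]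
    have t3 : (ξ + α + β) * (dI * dV + dI + dV)
        + (1 + dI + dV) * (α * dV + β * dI + ξ * dI + α + ξ * dV + β - α * dχ)
        - (ξ * dI * dV + α * dV + β * dI - α * dχ * dV) > 0 := by
      nlinarith [mul_pos (show (0:ℝ) < 1 + dI + dV by linarith) hb2,
        mul_pos hξ0 hdI, mul_pos hξ0 hdV, mul_pos (mul_pos hα hdI) hdV,
        mul_pos hα hdI, mul_pos (mul_pos hβ hdI) hdV, mul_pos hβ hdV,
        mul_nonneg (mul_nonneg hα.le hdχ) hdV.le]
    have t4 : (1 + dI + dV) * (dI * dV + dI + dV) - dI * dV > 0 := by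
      nlinarith [mul_pos hdI hdV, mul_pos (mul_pos hdI hdI) hdV, mul_pos (mul_pos hdI hdV) hdV]
    have expand : A * B - C
        = ((ξ + α + β) * (ξ * (α + β)) - (ξ - 1) * α * β)
        + ((ξ + α + β) * (α * dV + β * dI + ξ * dI + α + ξ * dV + β - α * dχ)
            + (1 + dI + dV) * (ξ * (α + β)) - (ξ * α * dV + ξ * β * dI - α * β * dχ)) * q2
        + ((ξ + α + β) * (dI * dV + dI + dV)
            + (1 + dI + dV) * (α * dV + β * dI + ξ * dI + α + ξ * dV + β - α * dχ)
            - (ξ * dI * dV + α * dV + β * dI - α * dχ * dV)) * q2 ^ 2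
        + ((1 + dI + dV) * (dI * dV + dI + dV) - dI * dV) * q2 ^ 3 := by
      rw [hA_def, hB_def, hC_def]; ring
    have : 0 < A * B - C := by
      rw [expand]
      have e2 := mul_pos t2 hq
      have e3 := mul_pos t3 (pow_pos hq 2)
      have e4 := mul_pos t4 (pow_pos hq 3)
      linarith
    linarith
  exact cubic_stable A B C hA hB hC hRH z hzre heq
end
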